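/- arXiv:1806.00230 — 2 statements merged into one kernel-verified Lean document; each statement's English description precedes it below -/
import Mathlib

section
/- Let M, N : I² → I be means and K an arbitrary (M,N)-invariant mean. Then there exists a 2-limit-like function φ : ℓ∞(I) → I such that K(x,y) = φ(x₀,y₀,x₁,y₁,...) for all x,y ∈ I, where (xₙ),(yₙ) are the orbit sequences of (M,N) starting from (x,y). -/
def IsMean (I : Set ℝ) (M : ℝ → ℝ → ℝ) : Prop :=
  ∀ x ∈ I, ∀ y ∈ I, M x y ∈ I ∧ min x y ≤ M x y ∧ M x y ≤ max x y

def IsInvariantMean (I : Set ℝ) (M N K : ℝ → ℝ → ℝ) : Prop :=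
  ∀ x ∈ I, ∀ y ∈ I, K x y = K (M x y) (N x y)

def orbit (M N : ℝ → ℝ → ℝ) (x y : ℝ) : ℕ → ℝ × ℝ
  | 0 => (x, y)
  | n + 1 => (M (orbit M N x y n).1 (orbit M N x y n).2,
      N (orbit M N x y n).1 (orbit M N x y n).2)

def TwoLimitLike (I : Set ℝ) (φ : (ℕ → ℝ) → ℝ) : Prop :=
  ∀ a : ℕ → ℝ, (∀ n, a n ∈ I) → BddAbove (Set.range a) → BddBelow (Set.range a) →
    φ (fun n => a (n + 2)) = φ a ∧
    Filter.liminf a Filter.atTop ≤ φ a ∧ φ a ≤ Filter.limsup a Filter.atTop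

def interOrbit (M N : ℝ → ℝ → ℝ) (x y : ℝ) (n : ℕ) : ℝ :=
  if n % 2 = 0 then (orbit M N x y (n / 2)).1 else (orbit M N x y (n / 2)).2

lemma orbit_shift (M N : ℝ → ℝ → ℝ) (x y : ℝ) :
    ∀ n, orbit M N x y (n + 1) = orbit M N (M x y) (N x y) n
  | 0 => by simp [orbit]
  | n + 1 => by
      show (M (orbit M N x y (n+1)).1 (orbit M N x y (n+1)).2,
        N (orbit M N x y (n+1)).1 (orbit M N x y (n+1)).2) = _
      rw [orbit_shift M N x y n]; rfl

lemma interOrbit_even (M N : ℝ → ℝ → ℝ) (x y : ℝ) (n : ℕ) :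
    interOrbit M N x y (2 * n) = (orbit M N x y n).1 := by
  simp [interOrbit, Nat.mul_mod_right, Nat.mul_div_cancel_left]

lemma interOrbit_odd (M N : ℝ → ℝ → ℝ) (x y : ℝ) (n : ℕ) :
    interOrbit M N x y (2 * n + 1) = (orbit M N x y n).2 := by
  have h1 : (2 * n + 1) % 2 = 1 := by omega
  have h2 : (2 * n + 1) / 2 = n := by omega
  simp [interOrbit, h1, h2]

lemma interOrbit_shift (M N : ℝ → ℝ → ℝ) (x y : ℝ) :
    (fun n => interOrbit M N x y (n + 2)) = interOrbit M N (M x y) (N x y) := by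
  funext n
  have h1 : (n + 2) % 2 = n % 2 := by omega
  have h2 : (n + 2) / 2 = n / 2 + 1 := by omega
  simp only [interOrbit, h1, h2, orbit_shift]

lemma orbit_mem {I : Set ℝ} {M N : ℝ → ℝ → ℝ} (hM : IsMean I M) (hN : IsMean I N)
    {x y : ℝ} (hx : x ∈ I) (hy : y ∈ I) :
    ∀ n, (orbit M N x y n).1 ∈ I ∧ (orbit M N x y n).2 ∈ I
  | 0 => ⟨hx, hy⟩
  | n + 1 => by
      have ih := orbit_mem hM hN hx hy n
      exact ⟨(hM _ ih.1 _ ih.2).1, (hN _ ih.1 _ ih.2).1⟩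

lemma K_orbit {I : Set ℝ} {M N K : ℝ → ℝ → ℝ} (hM : IsMean I M) (hN : IsMean I N)
    (hKinv : IsInvariantMean I M N K) {x y : ℝ} (hx : x ∈ I) (hy : y ∈ I) :
    ∀ n, K x y = K (orbit M N x y n).1 (orbit M N x y n).2
  | 0 => rfl
  | n + 1 => by
      have ih := K_orbit hM hN hKinv hx hy n
      have mem := orbit_mem hM hN hx hy n
      exact ih.trans (hKinv _ mem.1 _ mem.2)

/-- every `(M,N)`-invariant mean `K` arises as `B_φ` for some
2-limit-like function `φ`. -/
theorem stmt8 (I : Set ℝ) (hI : I.OrdConnected) (M N : ℝ → ℝ → ℝ)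
    (hM : IsMean I M) (hN : IsMean I N)
    (K : ℝ → ℝ → ℝ) (hK : IsMean I K) (hKinv : IsInvariantMean I M N K) :
    ∃ φ : (ℕ → ℝ) → ℝ, TwoLimitLike I φ ∧
      ∀ x ∈ I, ∀ y ∈ I, K x y = φ (interOrbit M N x y) := by
  classical
  set P : (ℕ → ℝ) → Prop := fun a =>
    ∃ k x y, x ∈ I ∧ y ∈ I ∧ (fun n => a (n + 2 * k)) = interOrbit M N x y with hP
  set φ : (ℕ → ℝ) → ℝ := fun a =>
    if h : P a then K (a (2 * h.choose)) (a (2 * h.choose + 1))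
    else Filter.liminf a Filter.atTop with hφ
  have E1 : ∀ (a : ℕ → ℝ) (j k : ℕ), j ≤ k →
      (∃ x y, x ∈ I ∧ y ∈ I ∧ (fun n => a (n + 2 * j)) = interOrbit M N x y) →
      K (a (2 * j)) (a (2 * j + 1)) = K (a (2 * k)) (a (2 * k + 1)) := by
    rintro a j k hjk ⟨x, y, hx, hy, hj⟩
    have h0 : a (2 * j) = x := by
      have := congrFun hj 0
      simpa [interOrbit, orbit] using this
    have h1 : a (2 * j + 1) = y := by
      have := congrFun hj 1
      have e : (1 : ℕ) + 2 * j = 2 * j + 1 := by omega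
      rw [e] at this
      simpa [interOrbit, orbit] using this
    have h2 : a (2 * k) = (orbit M N x y (k - j)).1 := by
      have := congrFun hj (2 * (k - j))
      have e : 2 * (k - j) + 2 * j = 2 * k := by omega
      rw [e] at this
      rw [this, interOrbit_even]
    have h3 : a (2 * k + 1) = (orbit M N x y (k - j)).2 := by
      have := congrFun hj (2 * (k - j) + 1)
      have e : 2 * (k - j) + 1 + 2 * j = 2 * k + 1 := by omega
      rw [e] at this
      rw [this, interOrbit_odd]
    rw [h0, h1, h2, h3]
    exact K_orbit hM hN hKinv hx hy (k - j)
  have E : ∀ (a : ℕ → ℝ) (j k : ℕ),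
      (∃ x y, x ∈ I ∧ y ∈ I ∧ (fun n => a (n + 2 * j)) = interOrbit M N x y) →
      (∃ x y, x ∈ I ∧ y ∈ I ∧ (fun n => a (n + 2 * k)) = interOrbit M N x y) →
      K (a (2 * j)) (a (2 * j + 1)) = K (a (2 * k)) (a (2 * k + 1)) := by
    intro a j k hj hk
    rcases le_total j k with h | h
    · exact E1 a j k h hj
    · exact (E1 a k j h hk).symm
  have φ_spec : ∀ (a : ℕ → ℝ) (k : ℕ),
      (∃ x y, x ∈ I ∧ y ∈ I ∧ (fun n => a (n + 2 * k)) = interOrbit M N x y) →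
      φ a = K (a (2 * k)) (a (2 * k + 1)) := by
    intro a k hk
    have hPa : P a := ⟨k, hk⟩
    rw [hφ]
    simp only [hPa, dif_pos]
    exact E a hPa.choose k hPa.choose_spec hk
  refine ⟨φ, ?_, ?_⟩
  · intro a ha hbdd_above hbdd_below
    obtain ⟨C, hC⟩ := hbdd_above
    obtain ⟨D, hD⟩ := hbdd_below
    have hbu : Filter.IsBoundedUnder (· ≤ ·) Filter.atTop a :=
      Filter.isBoundedUnder_of ⟨C, fun n => hC ⟨n, rfl⟩⟩
    have hbl : Filter.IsBoundedUnder (· ≥ ·) Filter.atTop a :=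
      Filter.isBoundedUnder_of ⟨D, fun n => hD ⟨n, rfl⟩⟩
    constructor
    · -- shift invariance
      by_cases hPa : P a
      · obtain ⟨k, x, y, hx, hy, hk⟩ := hPa
        -- witness for the shifted sequence
        have hb : (fun n => (fun m => a (m + 2)) (n + 2 * k)) =
            interOrbit M N (M x y) (N x y) := by
          funext n
          have e1 : n + 2 * k + 2 = (n + 2) + 2 * k := by omega
          show a (n + 2 * k + 2) = _
          rw [e1, congrFun hk (n + 2), ← interOrbit_shift]
        -- witness for a at k+1
        have ha' : (fun n => a (n + 2 * (k + 1))) =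
            interOrbit M N (M x y) (N x y) := by
          funext n
          have e1 : n + 2 * (k + 1) = (n + 2) + 2 * k := by omega
          rw [e1, congrFun hk (n + 2), ← interOrbit_shift]
        rw [φ_spec (fun m => a (m + 2)) k ⟨M x y, N x y, (hM x hx y hy).1, (hN x hx y hy).1, hb⟩,
          φ_spec a (k + 1) ⟨M x y, N x y, (hM x hx y hy).1, (hN x hx y hy).1, ha'⟩]
        have e1 : 2 * k + 2 = 2 * (k + 1) := by omega
        have e2 : 2 * k + 1 + 2 = 2 * (k + 1) + 1 := by omega
        show K (a (2 * k + 2)) (a (2 * k + 1 + 2)) = _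
        rw [e1, e2]
      · have hPb : ¬ P (fun m => a (m + 2)) := by
          rintro ⟨k, x, y, hx, hy, hk⟩
          refine hPa ⟨k + 1, x, y, hx, hy, ?_⟩
          funext n
          have e1 : n + 2 * (k + 1) = (n + 2 * k) + 2 := by omega
          rw [e1]
          exact congrFun hk n
        rw [hφ]
        simp only [hPa, hPb, dif_neg, not_false_iff]
        exact Filter.liminf_nat_add a 2
    · -- bounds
      by_cases hPa : P a
      · obtain ⟨k, x, y, hx, hy, hk⟩ := hPa
        rw [φ_spec a k ⟨x, y, hx, hy, hk⟩]
        have h0 : a (2 * k) = x := by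
          have := congrFun hk 0
          simpa [interOrbit, orbit] using this
        have h1 : a (2 * k + 1) = y := by
          have := congrFun hk 1
          have e : (1 : ℕ) + 2 * k = 2 * k + 1 := by omega
          rw [e] at this
          simpa [interOrbit, orbit] using this
        rw [h0, h1]
        have key : ∀ n : ℕ,
            min (a (2 * n + 2 * k)) (a (2 * n + 1 + 2 * k)) ≤ K x y ∧
            K x y ≤ max (a (2 * n + 2 * k)) (a (2 * n + 1 + 2 * k)) := by
          intro n
          have e1 : a (2 * n + 2 * k) = (orbit M N x y n).1 := by
            rw [congrFun hk (2 * n), interOrbit_even]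
          have e2 : a (2 * n + 1 + 2 * k) = (orbit M N x y n).2 := by
            rw [congrFun hk (2 * n + 1), interOrbit_odd]
          rw [e1, e2, K_orbit hM hN hKinv hx hy n]
          have mem := orbit_mem hM hN hx hy n
          exact ⟨(hK _ mem.1 _ mem.2).2.1, (hK _ mem.1 _ mem.2).2.2⟩
        constructor
        · refine Filter.liminf_le_of_frequently_le ?_ hbl
          refine Filter.frequently_atTop.mpr fun Nn => ?_
          rcases min_le_iff.mp (key Nn).1 with h | h
          · exact ⟨2 * Nn + 2 * k, by omega, h⟩
          · exact ⟨2 * Nn + 1 + 2 * k, by omega, h⟩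
        · refine Filter.le_limsup_of_frequently_le ?_ hbu
          refine Filter.frequently_atTop.mpr fun Nn => ?_
          rcases le_max_iff.mp (key Nn).2 with h | h
          · exact ⟨2 * Nn + 2 * k, by omega, h⟩
          · exact ⟨2 * Nn + 1 + 2 * k, by omega, h⟩
      · rw [hφ]
        simp only [hPa, dif_neg, not_false_iff]
        exact ⟨le_refl _, Filter.liminf_le_limsup hbu hbl⟩
  · intro x hx y hy
    have h0 : (fun n => interOrbit M N x y (n + 2 * 0)) = interOrbit M N x y := by
      funext n; simp
    rw [φ_spec (interOrbit M N x y) 0 ⟨x, y, hx, hy, h0⟩]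
    simp [interOrbit, orbit]
end

section
/- Let M, N : I² → I be means with M ≤ N satisfying |M(x,y)−N(x,y)| < |x−y| for x ≠ y, let Tr be the transfinite invariant mean, and let Φ : I² → ℝ be a continuous function. Then Φ(x,y) = Φ(M(x,y),N(x,y)) for all x,y ∈ I if and only if there exists a continuous function f : I → ℝ with Φ = f ∘ (Tr, Tr), i.e. Φ(x,y) = f(Tr(x,y)) for all x,y (one may take f(t) = Φ(t,t)). -/
open Ordinal

/-- The transfinite orbit of `(x,y)` under `(M,N)`: `x₀ = x`, `y₀ = y`,
`x_{α+1} = M(x_α, y_α)`, `y_{α+1} = N(x_α, y_α)`, and at limit ordinals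
`x_α = lim_{β↗α} x_β = sup_{1 ≤ β < α} x_β`, `y_α = lim_{β↗α} y_β = inf_{1 ≤ β < α} y_β`
(for `M ≤ N` the sequences are monotone from index `1` on, so these limits are the
suprema/infima of the tails). -/
noncomputable def tOrbit (M N : ℝ → ℝ → ℝ) (x y : ℝ) (o : Ordinal.{0}) : ℝ × ℝ :=
  Ordinal.limitRecOn o (x, y)
    (fun _ p => (M p.1 p.2, N p.1 p.2))
    (fun α _ ih =>
      (sSup {t : ℝ | ∃ β : Ordinal, ∃ h : β < α, 1 ≤ β ∧ (ih β h).1 = t},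
       sInf {t : ℝ | ∃ β : Ordinal, ∃ h : β < α, 1 ≤ β ∧ (ih β h).2 = t}))


/-- The transfinite invariant mean `Tr(x,y) := x_{ω₁} (= y_{ω₁})`. -/
noncomputable def Tr (M N : ℝ → ℝ → ℝ) (x y : ℝ) : ℝ :=
  (tOrbit M N x y ω₁).1

/-! Along the transfinite orbit, `x_α` increases and `y_α` decreases from index `1` on, and at
a limit ordinal `(x_α, y_α)` is the limit of the earlier terms. Hence a continuous `Φ` with
`Φ = Φ ∘ (M, N)` is constant along the whole orbit. The gap `y_α - x_α` cannot strictly drop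
at every successor step below `ω₁` (a rational fits into each drop, and `ω₁` is uncountable),
so some interval `[x_α, y_α]` with `α < ω₁` is not shrunk by `(M, N)`; the contraction
hypothesis makes it a point, which then also equals `x_{ω₁} = y_{ω₁}`. Conversely,
`Tr ∘ (M, N) = Tr` because the orbit of `(M(x, y), N(x, y))` is the orbit of `(x, y)` shifted
by one, and `1 + ω₁ = ω₁`. -/

open Set Filter Topology

theorem Ordinal.exists_lt_omega_one_add_one_eq_of_antitoneOn {f : Ordinal.{u} → ℝ}
    (hf : AntitoneOn f (Iio ω₁)) : ∃ β < ω₁, f (β + 1) = f β := by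
  by_contra! h
  have hsucc : ∀ β < ω₁, β + 1 < ω₁ := fun β hβ =>
    (Cardinal.isSuccLimit_omega 1).succ_lt hβ
  have hlt : ∀ β : Iio (ω₁ : Ordinal.{u}), f (β + 1) < f β := fun β =>
    (hf β.2 (hsucc _ β.2) le_self_add).lt_of_ne (h _ β.2)
  choose q hq₁ hq₂ using fun β => exists_rat_btwn (hlt β)
  have hq : StrictAnti q := fun β γ hβγ => by
    have : f γ ≤ f (β + 1) := hf (hsucc _ β.2) γ.2 (Order.add_one_le_of_lt hβγ)
    exact_mod_cast (hq₂ γ).trans_le (this.trans (hq₁ β).le)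
  have hcount := Cardinal.le_aleph0_iff_set_countable.2
    (Set.countable_coe_iff.1 hq.injective.countable)
  rw [Cardinal.mk_Iio_ordinal, card_omega] at hcount
  simp at hcount

variable {M N : ℝ → ℝ → ℝ} {x y : ℝ}

lemma tOrbit_zero : tOrbit M N x y 0 = (x, y) :=
  limitRecOn_zero _ _ _

lemma tOrbit_add_one (α : Ordinal) :
    tOrbit M N x y (α + 1) =
      (M (tOrbit M N x y α).1 (tOrbit M N x y α).2,
        N (tOrbit M N x y α).1 (tOrbit M N x y α).2) :=
  limitRecOn_add_one _ _ _ _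

lemma tOrbit_of_isSuccLimit {α : Ordinal} (hα : Order.IsSuccLimit α) :
    tOrbit M N x y α =
      (⨆ β : Ico 1 α, (tOrbit M N x y β).1, ⨅ β : Ico 1 α, (tOrbit M N x y β).2) := by
  rw [tOrbit, limitRecOn_limit _ _ _ _ hα]
  congr 1 <;> congr 1 <;> ext t <;>
    simp only [mem_ofPred_eq, mem_range, Subtype.exists, mem_Ico, exists_prop] <;>
    exact exists_congr fun β => by tauto

section Means

variable {I : Set ℝ} (hI : I.OrdConnected) (hM : IsMean I M) (hN : IsMean I N)
  (hMN : ∀ x ∈ I, ∀ y ∈ I, M x y ≤ N x y) (hx : x ∈ I) (hy : y ∈ I)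
include hI hM hN hMN hx hy

lemma tOrbit_mem_and_nested (α : Ordinal) :
    (tOrbit M N x y α).1 ∈ I ∧ (tOrbit M N x y α).2 ∈ I ∧
      ∀ β, 1 ≤ β → β ≤ α →
        (tOrbit M N x y β).1 ≤ (tOrbit M N x y α).1 ∧
        (tOrbit M N x y α).1 ≤ (tOrbit M N x y α).2 ∧
        (tOrbit M N x y α).2 ≤ (tOrbit M N x y β).2 := by
  induction α using Ordinal.limitRecOn with
  | zero =>
    rw [tOrbit_zero]
    exact ⟨hx, hy, fun β h1 h0 => absurd (h1.trans h0) (by simp)⟩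
  | add_one γ ih =>
    obtain ⟨ha, hb, hnest⟩ := ih
    rw [tOrbit_add_one]
    set a := (tOrbit M N x y γ).1
    set b := (tOrbit M N x y γ).2
    obtain ⟨hMI, hMmin, -⟩ := hM a ha b hb
    obtain ⟨hNI, -, hNmax⟩ := hN a ha b hb
    refine ⟨hMI, hNI, fun β h1 hβ => ?_⟩
    rcases hβ.eq_or_lt with rfl | hlt
    · rw [tOrbit_add_one]
      exact ⟨le_rfl, hMN a ha b hb, le_rfl⟩
    · obtain ⟨hxβ, hab, hyβ⟩ := hnest β h1 (Order.lt_add_one_iff.mp hlt)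
      rw [min_eq_left hab] at hMmin
      rw [max_eq_right hab] at hNmax
      exact ⟨hxβ.trans hMmin, hMN a ha b hb, hNmax.trans hyβ⟩
  | limit α hα ih =>
    have h1α := one_lt_of_isSuccLimit hα
    have hfst_le_snd (β γ : Ico 1 α) : (tOrbit M N x y β).1 ≤ (tOrbit M N x y γ).2 := by
      obtain ⟨-, -, hδ⟩ := ih (max β.1 γ.1) (max_lt β.2.2 γ.2.2)
      obtain ⟨hxβ, hδ', -⟩ := hδ β β.2.1 (le_max_left _ _)
      exact hxβ.trans (hδ'.trans (hδ γ γ.2.1 (le_max_right _ _)).2.2)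
    let one : Ico 1 α := ⟨1, le_rfl, h1α⟩
    have : Nonempty (Ico 1 α) := ⟨one⟩
    have hbdd : BddAbove (range fun β : Ico 1 α => (tOrbit M N x y β).1) :=
      ⟨_, forall_mem_range.2 fun β => hfst_le_snd β one⟩
    have hbdd' : BddBelow (range fun β : Ico 1 α => (tOrbit M N x y β).2) :=
      ⟨_, forall_mem_range.2 fun β => hfst_le_snd one β⟩
    have hsup_le_inf :
        ⨆ β : Ico 1 α, (tOrbit M N x y β).1 ≤ ⨅ β : Ico 1 α, (tOrbit M N x y β).2 :=
      ciSup_le fun β => le_ciInf fun γ => hfst_le_snd β γ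
    obtain ⟨h1x, h1y, -⟩ := ih 1 h1α
    refine ⟨?_, ?_, fun β h1 hβ => ?_⟩ <;> rw [tOrbit_of_isSuccLimit hα]
    · exact hI.out h1x h1y ⟨le_ciSup hbdd one, hsup_le_inf.trans (ciInf_le hbdd' one)⟩
    · exact hI.out h1x h1y ⟨(le_ciSup hbdd one).trans hsup_le_inf, ciInf_le hbdd' one⟩
    · rcases hβ.eq_or_lt with rfl | hlt
      · rw [tOrbit_of_isSuccLimit hα]
        exact ⟨le_rfl, hsup_le_inf, le_rfl⟩
      · exact ⟨le_ciSup hbdd ⟨β, h1, hlt⟩, hsup_le_inf, ciInf_le hbdd' ⟨β, h1, hlt⟩⟩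

lemma tOrbit_fst_mem (α : Ordinal) : (tOrbit M N x y α).1 ∈ I :=
  (tOrbit_mem_and_nested hI hM hN hMN hx hy α).1

lemma tOrbit_snd_mem (α : Ordinal) : (tOrbit M N x y α).2 ∈ I :=
  (tOrbit_mem_and_nested hI hM hN hMN hx hy α).2.1

lemma tOrbit_fst_le_snd {α : Ordinal} (hα : 1 ≤ α) :
    (tOrbit M N x y α).1 ≤ (tOrbit M N x y α).2 :=
  ((tOrbit_mem_and_nested hI hM hN hMN hx hy α).2.2 α hα le_rfl).2.1

lemma monotoneOn_tOrbit_fst : MonotoneOn (fun α => (tOrbit M N x y α).1) (Ici 1) :=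
  fun β hβ α _ hβα => ((tOrbit_mem_and_nested hI hM hN hMN hx hy α).2.2 β hβ hβα).1

lemma antitoneOn_tOrbit_snd : AntitoneOn (fun α => (tOrbit M N x y α).2) (Ici 1) :=
  fun β hβ α _ hβα => ((tOrbit_mem_and_nested hI hM hN hMN hx hy α).2.2 β hβ hβα).2.2

lemma tendsto_tOrbit_of_isSuccLimit {α : Ordinal} (hα : Order.IsSuccLimit α) :
    Tendsto (fun β : Ico 1 α => tOrbit M N x y β) atTop (𝓝 (tOrbit M N x y α)) := by
  have hmono : Monotone fun β : Ico 1 α => (tOrbit M N x y β).1 := fun β γ h =>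
    monotoneOn_tOrbit_fst hI hM hN hMN hx hy β.2.1 γ.2.1 h
  have hanti : Antitone fun β : Ico 1 α => (tOrbit M N x y β).2 := fun β γ h =>
    antitoneOn_tOrbit_snd hI hM hN hMN hx hy β.2.1 γ.2.1 h
  have hbdd : BddAbove (range fun β : Ico 1 α => (tOrbit M N x y β).1) :=
    ⟨(tOrbit M N x y 1).2, forall_mem_range.2 fun β =>
      (tOrbit_fst_le_snd hI hM hN hMN hx hy β.2.1).trans
        (antitoneOn_tOrbit_snd hI hM hN hMN hx hy self_mem_Ici β.2.1 β.2.1)⟩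
  have hbdd' : BddBelow (range fun β : Ico 1 α => (tOrbit M N x y β).2) :=
    ⟨(tOrbit M N x y 1).1, forall_mem_range.2 fun β =>
      (monotoneOn_tOrbit_fst hI hM hN hMN hx hy self_mem_Ici β.2.1 β.2.1).trans
        (tOrbit_fst_le_snd hI hM hN hMN hx hy β.2.1)⟩
  rw [tOrbit_of_isSuccLimit hα]
  exact (tendsto_atTop_ciSup hmono hbdd).prodMk_nhds (tendsto_atTop_ciInf hanti hbdd')

lemma apply_tOrbit_eq_of_invariant {X : Type*} [TopologicalSpace X] [T2Space X]
    {g : ℝ × ℝ → X} (hg : ContinuousOn g (I ×ˢ I))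
    (hinv : ∀ p ∈ I ×ˢ I, g (M p.1 p.2, N p.1 p.2) = g p) (α : Ordinal) :
    g (tOrbit M N x y α) = g (x, y) := by
  induction α using Ordinal.limitRecOn with
  | zero => rw [tOrbit_zero]
  | add_one γ ih =>
    rw [tOrbit_add_one, hinv _ ⟨tOrbit_fst_mem hI hM hN hMN hx hy γ,
      tOrbit_snd_mem hI hM hN hMN hx hy γ⟩, ih]
  | limit α hα ih =>
    have : Nonempty (Ico 1 α) := ⟨⟨1, le_rfl, one_lt_of_isSuccLimit hα⟩⟩
    have hmem (β : Ordinal) : tOrbit M N x y β ∈ I ×ˢ I :=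
      ⟨tOrbit_fst_mem hI hM hN hMN hx hy β, tOrbit_snd_mem hI hM hN hMN hx hy β⟩
    have hlim := (hg _ (hmem α)).tendsto.comp (tendsto_nhdsWithin_iff.2
      ⟨tendsto_tOrbit_of_isSuccLimit hI hM hN hMN hx hy hα, .of_forall fun β => hmem β⟩)
    exact tendsto_nhds_unique hlim (tendsto_const_nhds.congr fun β => (ih β β.2.2).symm)

lemma tOrbit_mean_mean (α : Ordinal) :
    tOrbit M N (M x y) (N x y) α = tOrbit M N x y (1 + α) := by
  induction α using Ordinal.limitRecOn with
  | zero => rw [tOrbit_zero, add_zero, ← zero_add 1, tOrbit_add_one, tOrbit_zero]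
  | add_one γ ih => rw [tOrbit_add_one, ih, ← add_assoc, tOrbit_add_one]
  | limit α hα ih =>
    have : Nonempty (Ico 1 α) := ⟨⟨1, le_rfl, one_lt_of_isSuccLimit hα⟩⟩
    have hone : 1 + α = α := one_add_of_omega0_le (omega0_le_of_isSuccLimit hα)
    let shift : Ico 1 α → Ico 1 α := fun β =>
      ⟨1 + β, le_self_add, ((add_lt_add_iff_left 1).2 β.2.2).trans_eq hone⟩
    have hshift : Tendsto shift atTop atTop :=
      tendsto_atTop_mono (fun β => Subtype.mk_le_mk.2 le_add_self) tendsto_id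
    rw [hone]
    refine tendsto_nhds_unique (tendsto_tOrbit_of_isSuccLimit hI hM hN hMN
      (hM x hx y hy).1 (hN x hx y hy).1 hα) ?_
    exact ((tendsto_tOrbit_of_isSuccLimit hI hM hN hMN hx hy hα).comp hshift).congr
      fun β => (ih β β.2.2).symm

lemma tr_mean_mean : Tr M N (M x y) (N x y) = Tr M N x y := by
  rw [Tr, Tr, tOrbit_mean_mean hI hM hN hMN hx hy, one_add_of_omega0_le (omega0_le_omega 1)]

lemma tOrbit_fst_eq_snd_of_gap_eq
    (hcontr : ∀ x ∈ I, ∀ y ∈ I, x ≠ y → |M x y - N x y| < |x - y|)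
    {α : Ordinal} (hα : 1 ≤ α)
    (hgap : (tOrbit M N x y (α + 1)).2 - (tOrbit M N x y (α + 1)).1 =
      (tOrbit M N x y α).2 - (tOrbit M N x y α).1) :
    (tOrbit M N x y α).1 = (tOrbit M N x y α).2 := by
  have hα' : α + 1 ∈ Ici 1 := hα.trans le_self_add
  have hfst := monotoneOn_tOrbit_fst hI hM hN hMN hx hy hα hα' le_self_add
  have hsnd := antitoneOn_tOrbit_snd hI hM hN hMN hx hy hα hα' le_self_add
  simp only [tOrbit_add_one] at hgap hfst hsnd
  by_contra hne
  have := hcontr _ (tOrbit_fst_mem hI hM hN hMN hx hy α) _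
    (tOrbit_snd_mem hI hM hN hMN hx hy α) hne
  rw [show M _ _ = (tOrbit M N x y α).1 by linarith,
    show N _ _ = (tOrbit M N x y α).2 by linarith] at this
  exact this.false

lemma tOrbit_omega_one_fst_eq_snd
    (hcontr : ∀ x ∈ I, ∀ y ∈ I, x ≠ y → |M x y - N x y| < |x - y|) :
    (tOrbit M N x y ω₁).1 = (tOrbit M N x y ω₁).2 := by
  have hfst := monotoneOn_tOrbit_fst hI hM hN hMN hx hy
  have hsnd := antitoneOn_tOrbit_snd hI hM hN hMN hx hy
  have h1 (β : Ordinal) : β + 1 ∈ Ici 1 := mem_Ici.2 le_add_self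
  have hω₁ : (1 : Ordinal) ≤ ω₁ := (one_lt_of_isSuccLimit (Cardinal.isSuccLimit_omega 1)).le
  have hgap : AntitoneOn (fun β => (tOrbit M N x y (β + 1)).2 - (tOrbit M N x y (β + 1)).1)
      (Iio ω₁) := fun β _ γ _ hβγ =>
    sub_le_sub (hsnd (h1 β) (h1 γ) (add_le_add_left hβγ 1))
      (hfst (h1 β) (h1 γ) (add_le_add_left hβγ 1))
  obtain ⟨β, hβ, hβgap⟩ := exists_lt_omega_one_add_one_eq_of_antitoneOn hgap
  have hβω₁ : β + 1 ≤ ω₁ := Order.add_one_le_of_lt hβ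
  refine (tOrbit_fst_le_snd hI hM hN hMN hx hy hω₁).antisymm ?_
  calc (tOrbit M N x y ω₁).2 ≤ (tOrbit M N x y (β + 1)).2 := hsnd (h1 β) hω₁ hβω₁
    _ = (tOrbit M N x y (β + 1)).1 :=
      (tOrbit_fst_eq_snd_of_gap_eq hI hM hN hMN hx hy hcontr (h1 β) hβgap).symm
    _ ≤ (tOrbit M N x y ω₁).1 := hfst (h1 β) hω₁ hβω₁

end Means

/-- a continuous `Φ : I² → ℝ` satisfies `Φ = Φ ∘ (M,N)` iff
`Φ = f ∘ (Tr, Tr)` for some continuous `f : I → ℝ` (one may take `f t = Φ(t,t)`). -/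
theorem stmt17 (I : Set ℝ) (hI : I.OrdConnected) (M N : ℝ → ℝ → ℝ)
    (hM : IsMean I M) (hN : IsMean I N)
    (hMN : ∀ x ∈ I, ∀ y ∈ I, M x y ≤ N x y)
    (hcontr : ∀ x ∈ I, ∀ y ∈ I, x ≠ y → |M x y - N x y| < |x - y|)
    (Φ : ℝ → ℝ → ℝ) (hΦ : ContinuousOn (fun p : ℝ × ℝ => Φ p.1 p.2) (I ×ˢ I)) :
    (∀ x ∈ I, ∀ y ∈ I, Φ x y = Φ (M x y) (N x y)) ↔
      ∃ f : ℝ → ℝ, ContinuousOn f I ∧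
        ∀ x ∈ I, ∀ y ∈ I, Φ x y = f (Tr M N x y) := by
  constructor
  · intro hinv
    refine ⟨fun t => Φ t t, hΦ.comp (continuous_id.prodMk continuous_id).continuousOn
      fun t ht => ⟨ht, ht⟩, fun x hx y hy => ?_⟩
    have horbit := apply_tOrbit_eq_of_invariant hI hM hN hMN hx hy hΦ
      (fun p hp => (hinv p.1 hp.1 p.2 hp.2).symm) ω₁
    calc Φ x y = Φ (tOrbit M N x y ω₁).1 (tOrbit M N x y ω₁).2 := horbit.symm
      _ = Φ (Tr M N x y) (Tr M N x y) := by
        rw [Tr, tOrbit_omega_one_fst_eq_snd hI hM hN hMN hx hy hcontr]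
  · rintro ⟨f, -, hf⟩ x hx y hy
    rw [hf x hx y hy, hf _ (hM x hx y hy).1 _ (hN x hx y hy).1,
      tr_mean_mean hI hM hN hMN hx hy]
end
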